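/- Let N and m be positive integers with 2m ≤ N, and let A ∈ ℂ^{m×N} be the partial IDFT matrix. If the column indices ω_p, ω_q ∈ {1,…,N} satisfy N/(2m) ≤ |ω_p − ω_q| ≤ N − N/(2m), then the column correlation satisfies f(ω_p, ω_q) ≤ 1/(m·sin(π/(2m))). -/

import Mathlib

/-!
Writing `θ = 2π(ω_q − ω_p)/N`, the inner product of the two columns is the normalized geometric
sum `(1/m) ∑_{l<m} e^{ilθ}`, and `|∑_{l<m} e^{ilθ}| = |e^{imθ} − 1| / |e^{iθ} − 1| ≤ 1 / |sin (θ/2)|`.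
The hypothesis on `|ω_p − ω_q|` places `|θ/2|` in `[π/(2m), π − π/(2m)]`, where
`|sin| ≥ sin (π/(2m))`.
-/

open Complex Real

/-- The ω-th column of the partial IDFT matrix `A ∈ ℂ^{m×N}` with entries
`A_{l,ω} = (1/√m)·exp(2πi(l−1)(ω−1)/N)` (here indexed from 0). -/
noncomputable def idftCol (N m : ℕ) (ω : Fin N) : EuclideanSpace ℂ (Fin m) :=
  WithLp.toLp 2 (fun l : Fin m => ((1 / Real.sqrt m : ℝ) : ℂ) *
    Complex.exp (2 * Real.pi * Complex.I * ((l : ℕ) : ℂ) * ((ω : ℕ) : ℂ) / (N : ℂ)))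

lemma Complex.norm_geom_sum_exp_I_mul_le (θ : ℝ) (n : ℕ) (hθ : Real.sin (θ / 2) ≠ 0) :
    ‖∑ i ∈ Finset.range n, exp (I * θ) ^ i‖ ≤ 1 / |Real.sin (θ / 2)| := by
  set z := exp (I * θ)
  have hz1 : ‖z - 1‖ = 2 * |Real.sin (θ / 2)| := by
    rw [norm_exp_I_mul_ofReal_sub_one, norm_mul, Real.norm_ofNat, Real.norm_eq_abs]
  have hz_ne : z ≠ 1 := fun h => by
    rw [h, sub_self, norm_zero] at hz1
    exact hθ (abs_eq_zero.mp (by linarith))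
  have hnum : ‖z ^ n - 1‖ ≤ 2 := by
    have hz : ‖z‖ = 1 := norm_exp_I_mul_ofReal θ
    calc ‖z ^ n - 1‖ ≤ ‖z ^ n‖ + ‖(1 : ℂ)‖ := norm_sub_le _ _
      _ = 2 := by rw [norm_pow, hz, one_pow, norm_one]; norm_num
  rw [geom_sum_eq hz_ne, norm_div, hz1]
  calc ‖z ^ n - 1‖ / (2 * |Real.sin (θ / 2)|) ≤ 2 / (2 * |Real.sin (θ / 2)|) := by gcongr
    _ = 1 / |Real.sin (θ / 2)| := by field_simp

lemma Real.sin_le_abs_sin_of_le_abs_of_abs_le_pi_sub {a x : ℝ} (ha : 0 ≤ a) (h₁ : a ≤ |x|)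
    (h₂ : |x| ≤ π - a) : Real.sin a ≤ |Real.sin x| := by
  rw [abs_sin_eq_sin_abs_of_abs_le_pi (by linarith)]
  rcases le_or_gt |x| (π / 2) with h | h
  · exact sin_le_sin_of_le_of_le_pi_div_two (by linarith [pi_pos]) h h₁
  · rw [← sin_pi_sub |x|]
    exact sin_le_sin_of_le_of_le_pi_div_two (by linarith [pi_pos]) (by linarith) (by linarith)

lemma Real.sin_pi_div_two_mul_le_abs_sin {N m d : ℝ} (hN : 0 < N) (hm : 0 ≤ m)
    (hlow : N / (2 * m) ≤ |d|) (hhigh : |d| ≤ N - N / (2 * m)) :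
    Real.sin (π / (2 * m)) ≤ |Real.sin (π / N * d)| := by
  have hπN : 0 ≤ π / N := by positivity
  have hscale : π / N * (N / (2 * m)) = π / (2 * m) := by field_simp
  apply sin_le_abs_sin_of_le_abs_of_abs_le_pi_sub (by positivity)
  · rw [abs_mul, abs_of_nonneg hπN, ← hscale]
    exact mul_le_mul_of_nonneg_left hlow hπN
  · calc |π / N * d| = π / N * |d| := by rw [abs_mul, abs_of_nonneg hπN]
      _ ≤ π / N * (N - N / (2 * m)) := mul_le_mul_of_nonneg_left hhigh hπN
      _ = π - π / (2 * m) := by rw [mul_sub, hscale]; field_simp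

lemma inner_idftCol (N m : ℕ) (p q : Fin N) :
    (inner ℂ (idftCol N m p) (idftCol N m q) : ℂ) =
      1 / (m : ℂ) * ∑ l ∈ Finset.range m,
        exp (I * ((2 * π * (((q : ℕ) : ℝ) - ((p : ℕ) : ℝ)) / N : ℝ) : ℂ)) ^ l := by
  have hscale : ((1 / √m : ℝ) : ℂ) * ((1 / √m : ℝ) : ℂ) = 1 / (m : ℂ) := by
    rw [← ofReal_mul, div_mul_div_comm, one_mul, mul_self_sqrt m.cast_nonneg]
    push_cast; ring
  rw [PiLp.inner_apply, Finset.mul_sum, ← Fin.sum_univ_eq_sum_range]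
  refine Finset.sum_congr rfl fun l _ => ?_
  simp only [idftCol, PiLp.toLp_apply, RCLike.inner_apply, map_mul, ← exp_conj, map_div₀,
    conj_I, conj_ofReal, map_ofNat, conj_natCast]
  rw [mul_mul_mul_comm, hscale, ← Complex.exp_add, ← Complex.exp_nat_mul]
  congr 2
  push_cast
  ring

theorem column_correlation_bound_general (N m : ℕ) (hm : 0 < m)
    (ωp ωq : Fin N)
    (hlow : (N : ℝ) / (2 * m) ≤ |((ωp : ℕ) : ℝ) - ((ωq : ℕ) : ℝ)|)
    (hhigh : |((ωp : ℕ) : ℝ) - ((ωq : ℕ) : ℝ)| ≤ (N : ℝ) - (N : ℝ) / (2 * m)) :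
    ‖(inner ℂ (idftCol N m ωp) (idftCol N m ωq) : ℂ)‖ ≤
      1 / (m * Real.sin (Real.pi / (2 * m))) := by
  set θ : ℝ := 2 * π * (((ωq : ℕ) : ℝ) - ((ωp : ℕ) : ℝ)) / N
  have hmR : (1 : ℝ) ≤ m := by exact_mod_cast hm
  have hsin_pos : 0 < Real.sin (π / (2 * m)) :=
    sin_pos_of_pos_of_lt_pi (by positivity) (div_lt_self pi_pos (by linarith))
  have hsin_le : Real.sin (π / (2 * m)) ≤ |Real.sin (θ / 2)| := by
    have hθ : θ / 2 = π / N * (((ωq : ℕ) : ℝ) - ((ωp : ℕ) : ℝ)) := by ring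
    rw [abs_sub_comm] at hlow hhigh
    rw [hθ]
    exact sin_pi_div_two_mul_le_abs_sin (by exact_mod_cast ωp.pos) (by linarith) hlow hhigh
  rw [inner_idftCol, norm_mul]
  calc ‖1 / (m : ℂ)‖ * ‖∑ l ∈ Finset.range m, exp (I * θ) ^ l‖
      ≤ 1 / m * (1 / |Real.sin (θ / 2)|) := by
        rw [norm_div, norm_one, Complex.norm_natCast]
        gcongr
        exact norm_geom_sum_exp_I_mul_le θ m (abs_pos.mp (hsin_pos.trans_le hsin_le))
    _ ≤ 1 / m * (1 / Real.sin (π / (2 * m))) := by gcongr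
    _ = 1 / (m * Real.sin (π / (2 * m))) := one_div_mul_one_div _ _

/-- if `2m ≤ N` and the column indices satisfy
`N/(2m) ≤ |ω_p − ω_q| ≤ N − N/(2m)`, then the column correlation of the partial IDFT
matrix satisfies `f(ω_p, ω_q) ≤ 1/(m·sin(π/(2m)))`. -/
theorem column_correlation_bound (N m : ℕ) (hN : 0 < N) (hm : 0 < m) (h2m : 2 * m ≤ N)
    (ωp ωq : Fin N)
    (hlow : (N : ℝ) / (2 * m) ≤ |((ωp : ℕ) : ℝ) - ((ωq : ℕ) : ℝ)|)
    (hhigh : |((ωp : ℕ) : ℝ) - ((ωq : ℕ) : ℝ)| ≤ (N : ℝ) - (N : ℝ) / (2 * m)) :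
    ‖(inner ℂ (idftCol N m ωp) (idftCol N m ωq) : ℂ)‖ ≤
      1 / (m * Real.sin (Real.pi / (2 * m))) :=
  column_correlation_bound_general N m hm ωp ωq hlow hhigh
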